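/- Let n > m ≥ 0 and define H(j,k) = (−1)^{b(j,k)} for j, k ∈ {0, …, 2ⁿ − 1}, where b(j,k) is the number of bit positions at which the binary expansions of j and k both have a 1. For 0 ≤ i ≤ 2^{n−m} − 1 and 0 ≤ r ≤ 2^m − 1, set e^i_r = (1/√(2ⁿ − 2^m)) · (H(j, i·2^m + r))_{2^m ≤ j ≤ 2ⁿ−1} ∈ ℝ^{2ⁿ−2^m}. Then for all i₁ ≠ i₂ and all r₁, r₂, ⟨e^{i₁}_{r₁}, e^{i₂}_{r₂}⟩ = −(2^m/(2ⁿ − 2^m)) · δ_{r₁,r₂}. -/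

import Mathlib

/-!
Up to the factor `1 / (2ⁿ - 2^m)`, `⟪e^{i₁}_{r₁}, e^{i₂}_{r₂}⟫` is the sum over the rows
`j ≥ 2^m` of `H(j, A) H(j, B) = H(j, A ^^^ B)`, where `A = i₁ 2^m + r₁`, `B = i₂ 2^m + r₂`:
`k ↦ (-1)^b(j,k)` is a character of `(ℕ, ^^^)` because the parity of the number of ones is
additive under xor. Over the first `2^N` rows, column `K` of the Hadamard matrix sums to `2^N`
if `K ≡ 0 mod 2^N` and to `0` otherwise. For `K = A ^^^ B ≠ 0` the sum over all `2ⁿ` rows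
vanishes, so the sum over the rows `j ≥ 2^m` is minus the sum over the first `2^m` rows, which
is `2^m` exactly when `K ≡ r₁ ^^^ r₂ ≡ 0 mod 2^m`, i.e. when `r₁ = r₂`.
-/

open scoped InnerProductSpace

def bitOverlap (j k : ℕ) : ℕ := (Nat.land j k).bits.count true

theorem Nat.count_true_bits_bit (b : Bool) (n : ℕ) :
    (Nat.bit b n).bits.count true = b.toNat + n.bits.count true := by
  rcases eq_or_ne n 0 with rfl | hn
  · cases b <;> simp
  · rw [Nat.bits_append_bit n b fun h => absurd h hn]
    cases b <;> simp [add_comm]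

theorem Nat.count_true_bits_two_pow (t : ℕ) : (2 ^ t).bits.count true = 1 := by
  induction t with
  | zero => simp
  | succ t ih =>
    rw [pow_succ', Nat.bit0_bits _ (by positivity), List.count_cons_of_ne (by simp), ih]

theorem Nat.neg_one_pow_count_true_bits_xor {R : Type*} [Monoid R] [HasDistribNeg R] (x y : ℕ) :
    (-1 : R) ^ (x ^^^ y).bits.count true =
      (-1) ^ x.bits.count true * (-1) ^ y.bits.count true := by
  induction x using Nat.binaryRec generalizing y with
  | zero => simp
  | bit a x ih =>
    rw [← Nat.bit_bodd_div2 y, Nat.xor_bit, Nat.count_true_bits_bit, Nat.count_true_bits_bit,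
      Nat.count_true_bits_bit, pow_add, pow_add, pow_add, ih]
    cases a <;> cases y.bodd <;> simp

theorem bitOverlap_def (j k : ℕ) : bitOverlap j k = (j &&& k).bits.count true := rfl

theorem bitOverlap_comm (j k : ℕ) : bitOverlap j k = bitOverlap k j := by
  rw [bitOverlap_def, bitOverlap_def, Nat.land_comm]

@[simp]
theorem bitOverlap_zero_right (j : ℕ) : bitOverlap j 0 = 0 := by
  simp [bitOverlap_def]

theorem bitOverlap_two_pow_left (t k : ℕ) : bitOverlap (2 ^ t) k = (k.testBit t).toNat := by
  rw [bitOverlap_def, Nat.two_pow_and]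
  cases k.testBit t <;> simp [Nat.count_true_bits_two_pow]

theorem bitOverlap_mod_two_pow_right {N j : ℕ} (hj : j < 2 ^ N) (k : ℕ) :
    bitOverlap j (k % 2 ^ N) = bitOverlap j k := by
  rw [bitOverlap_def, bitOverlap_def, ← Nat.mod_eq_of_lt hj, ← Nat.and_mod_two_pow,
    Nat.mod_eq_of_lt hj, Nat.mod_eq_of_lt (Nat.and_le_left.trans_lt hj)]

section Sign

variable {R : Type*} [Monoid R] [HasDistribNeg R]

theorem neg_one_pow_bitOverlap_xor_left (x y k : ℕ) :
    (-1 : R) ^ bitOverlap (x ^^^ y) k = (-1) ^ bitOverlap x k * (-1) ^ bitOverlap y k := by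
  rw [bitOverlap_def, Nat.and_xor_distrib_right, Nat.neg_one_pow_count_true_bits_xor]; rfl

theorem neg_one_pow_bitOverlap_xor_right (j x y : ℕ) :
    (-1 : R) ^ bitOverlap j (x ^^^ y) = (-1) ^ bitOverlap j x * (-1) ^ bitOverlap j y := by
  simp only [bitOverlap_comm j, neg_one_pow_bitOverlap_xor_left]

end Sign

section Sum

variable {R : Type*} [Ring R]

-- `j ↦ j ^^^ 2 ^ t` flips the sign of every term.
theorem sum_range_two_pow_neg_one_pow_bitOverlap_of_testBit {N K t : ℕ} (ht : t < N)
    (hK : K.testBit t) : ∑ j ∈ Finset.range (2 ^ N), (-1 : R) ^ bitOverlap j K = 0 := by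
  refine Finset.sum_involution (fun j _ => j ^^^ 2 ^ t) (fun j _ => ?_) (fun j _ _ => ?_)
    (fun j hj => ?_) (fun j _ => xor_cancel_right j _)
  · rw [neg_one_pow_bitOverlap_xor_left, bitOverlap_two_pow_left, hK]
    simp
  · simp
  · exact Finset.mem_range.2 (Nat.xor_lt_two_pow (Finset.mem_range.1 hj)
      (Nat.pow_lt_pow_right one_lt_two ht))

theorem sum_range_two_pow_neg_one_pow_bitOverlap (N K : ℕ) :
    ∑ j ∈ Finset.range (2 ^ N), (-1 : R) ^ bitOverlap j K =
      if K % 2 ^ N = 0 then 2 ^ N else 0 := by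
  rw [← Finset.sum_congr rfl fun j hj =>
    congrArg ((-1 : R) ^ ·) (bitOverlap_mod_two_pow_right (Finset.mem_range.1 hj) K)]
  split_ifs with hK
  · simp [hK]
  · obtain ⟨t, ht⟩ := Nat.exists_testBit_of_ne_zero hK
    have htN : t < N := by
      rw [Nat.testBit_mod_two_pow, Bool.and_eq_true, decide_eq_true_iff] at ht
      exact ht.1
    exact sum_range_two_pow_neg_one_pow_bitOverlap_of_testBit htN ht

theorem sum_range_sub_two_pow_neg_one_pow_bitOverlap_add {m n K : ℕ} (hmn : m ≤ n)
    (hK : K % 2 ^ n ≠ 0) :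
    ∑ j ∈ Finset.range (2 ^ n - 2 ^ m), (-1 : R) ^ bitOverlap (j + 2 ^ m) K =
      -(if K % 2 ^ m = 0 then 2 ^ m else 0) := by
  have hsplit := sum_range_two_pow_neg_one_pow_bitOverlap (R := R) n K
  rw [if_neg hK, ← Nat.add_sub_of_le (Nat.pow_le_pow_right two_pos hmn), Finset.sum_range_add,
    sum_range_two_pow_neg_one_pow_bitOverlap] at hsplit
  simp only [add_comm (2 ^ m)] at hsplit
  exact eq_neg_of_add_eq_zero_right hsplit

end Sum

theorem mul_two_pow_add_lt_two_pow {m n i r : ℕ} (hmn : m ≤ n) (hi : i < 2 ^ (n - m))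
    (hr : r < 2 ^ m) : i * 2 ^ m + r < 2 ^ n :=
  calc i * 2 ^ m + r < (i + 1) * 2 ^ m := by rw [add_one_mul]; exact Nat.add_lt_add_left hr _
    _ ≤ 2 ^ (n - m) * 2 ^ m := Nat.mul_le_mul_right _ hi
    _ = 2 ^ n := by rw [← pow_add, Nat.sub_add_cancel hmn]

theorem mul_two_pow_add_div_two_pow {m r : ℕ} (i : ℕ) (hr : r < 2 ^ m) :
    (i * 2 ^ m + r) / 2 ^ m = i := by
  rw [mul_comm, Nat.mul_add_div (Nat.two_pow_pos m), Nat.div_eq_of_lt hr, add_zero]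

theorem xor_mul_two_pow_add_mod_two_pow_ne_zero {m n i₁ i₂ r₁ r₂ : ℕ} (hmn : m ≤ n)
    (hi₁ : i₁ < 2 ^ (n - m)) (hi₂ : i₂ < 2 ^ (n - m)) (hr₁ : r₁ < 2 ^ m) (hr₂ : r₂ < 2 ^ m)
    (hi : i₁ ≠ i₂) : ((i₁ * 2 ^ m + r₁) ^^^ (i₂ * 2 ^ m + r₂)) % 2 ^ n ≠ 0 := by
  rw [Nat.mod_eq_of_lt (Nat.xor_lt_two_pow (mul_two_pow_add_lt_two_pow hmn hi₁ hr₁)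
    (mul_two_pow_add_lt_two_pow hmn hi₂ hr₂)), Ne, xor_eq_zero_iff]
  intro h
  apply hi
  rw [← mul_two_pow_add_div_two_pow i₁ hr₁, ← mul_two_pow_add_div_two_pow i₂ hr₂, h]

theorem xor_mul_two_pow_add_mod_two_pow_eq_zero_iff {m i₁ i₂ r₁ r₂ : ℕ} (hr₁ : r₁ < 2 ^ m)
    (hr₂ : r₂ < 2 ^ m) : ((i₁ * 2 ^ m + r₁) ^^^ (i₂ * 2 ^ m + r₂)) % 2 ^ m = 0 ↔ r₁ = r₂ := by
  rw [Nat.xor_mod_two_pow, Nat.mul_add_mod_of_lt hr₁, Nat.mul_add_mod_of_lt hr₂, xor_eq_zero_iff]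

/-- Cross inner products between the orthonormal bases of distinct subspaces in
the Walsh–Hadamard fusion frame construction:
`⟪e^{i₁}_{r₁}, e^{i₂}_{r₂}⟫ = −(2^m/(2ⁿ − 2^m)) δ_{r₁ r₂}` for `i₁ ≠ i₂`. -/
theorem stmt_12 (n m : ℕ) (hmn : m < n)
    (e : Fin (2 ^ (n - m)) → Fin (2 ^ m) → EuclideanSpace ℝ (Fin (2 ^ n - 2 ^ m)))
    (he : ∀ (i : Fin (2 ^ (n - m))) (r : Fin (2 ^ m)) (j : Fin (2 ^ n - 2 ^ m)),
      e i r j = (1 / Real.sqrt ((2 ^ n : ℝ) - 2 ^ m)) *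
        (-1 : ℝ) ^ bitOverlap (j.val + 2 ^ m) (i.val * 2 ^ m + r.val)) :
    ∀ i₁ i₂ : Fin (2 ^ (n - m)), i₁ ≠ i₂ →
      ∀ r₁ r₂ : Fin (2 ^ m),
        ⟪e i₁ r₁, e i₂ r₂⟫_ℝ =
          -((2 ^ m : ℝ) / ((2 ^ n : ℝ) - 2 ^ m)) * (if r₁ = r₂ then 1 else 0) := by
  intro i₁ i₂ hi r₁ r₂
  set A := i₁.val * 2 ^ m + r₁.val
  set B := i₂.val * 2 ^ m + r₂.val
  have hKn := xor_mul_two_pow_add_mod_two_pow_ne_zero hmn.le i₁.2 i₂.2 r₁.2 r₂.2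
    (Fin.val_injective.ne hi)
  have hKm := xor_mul_two_pow_add_mod_two_pow_eq_zero_iff (i₁ := i₁) (i₂ := i₂) r₁.2 r₂.2
  have hd : 0 < (2 ^ n : ℝ) - 2 ^ m := sub_pos.2 (pow_lt_pow_right₀ one_lt_two hmn)
  have hterm : ∀ j : Fin (2 ^ n - 2 ^ m), e i₁ r₁ j * e i₂ r₂ j =
      (-1 : ℝ) ^ bitOverlap (j.val + 2 ^ m) (A ^^^ B) / ((2 ^ n : ℝ) - 2 ^ m) := by
    intro j
    rw [he, he, neg_one_pow_bitOverlap_xor_right]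
    field_simp
    rw [Real.sq_sqrt hd.le]
  calc ⟪e i₁ r₁, e i₂ r₂⟫_ℝ
      = (∑ j ∈ Finset.range (2 ^ n - 2 ^ m), (-1 : ℝ) ^ bitOverlap (j + 2 ^ m) (A ^^^ B)) /
          ((2 ^ n : ℝ) - 2 ^ m) := by
        simp only [PiLp.inner_apply, RCLike.inner_apply, conj_trivial, mul_comm (e i₂ r₂ _),
          hterm, ← Finset.sum_div]
        rw [Fin.sum_univ_eq_sum_range (fun j => (-1 : ℝ) ^ bitOverlap (j + 2 ^ m) (A ^^^ B))]
    _ = _ := by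
        rw [sum_range_sub_two_pow_neg_one_pow_bitOverlap_add hmn.le hKn]
        simp only [hKm, Fin.val_inj]
        split_ifs <;> ring
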